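/- Let n ≥ 2, B ⊂ ℝ^n the open unit ball, and u : B → ℝ, u(x) = −√(1 − |x|), whose gradient at x ≠ 0 is ∇u(x) = x/(2|x|√(1−|x|)). Then F_1^*(x, −∇u(x))² = (1+|x|)²/(4(1−|x|)) for x ≠ 0, and ∫_B F_1^*(x, −∇u(x))² dx = +∞ (the integrand is not Lebesgue integrable on B). -/

import Mathlib

open Metric MeasureTheory

/-- The polar transform of the Funk metric: `F_1^*(x,y) = |y| - ⟨x,y⟩`. -/
noncomputable def F1Star (n : ℕ) (x y : EuclideanSpace ℝ (Fin n)) : ℝ :=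
  ‖y‖ - (inner ℝ x y : ℝ)

/-!
On `x ≠ 0` the vector `-∇u(x)` is a positive multiple of `x`, so
`F_1^*(x, -∇u(x)) = (1 + |x|) |∇u(x)|`, whose square `(1 + t)² / (4 (1 - t))`, `t = |x|`, is radial.
In polar coordinates its integral over `B` is a positive multiple of
`∫₀¹ tⁿ⁻¹ (1 + t)² / (4 (1 - t)) dt`, which diverges logarithmically at `t = 1`.
-/

open Set

noncomputable def radialDensity (t : ℝ) : ℝ := (1 + t) ^ 2 / (4 * (1 - t))

lemma sq_F1Star_neg_gradient {n : ℕ} {x : EuclideanSpace ℝ (Fin n)} (hx : ‖x‖ < 1)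
    (hx0 : x ≠ 0) :
    F1Star n x (-((2 * ‖x‖ * √(1 - ‖x‖))⁻¹ • x)) ^ 2 = (1 + ‖x‖) ^ 2 / (4 * (1 - ‖x‖)) := by
  have h1 : 0 < 1 - ‖x‖ := by linarith
  have hpos : 0 < 2 * ‖x‖ * √(1 - ‖x‖) := by
    have := norm_pos_iff.mpr hx0
    positivity
  rw [F1Star, norm_neg, norm_smul, inner_neg_right, real_inner_smul_right,
    real_inner_self_eq_norm_sq, Real.norm_eq_abs, abs_of_pos (inv_pos.2 hpos)]
  field_simp
  rw [Real.sq_sqrt h1.le]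
  ring

lemma not_integrableOn_Ioo_of_mul_inv_sub_le {f : ℝ → ℝ} {a b c : ℝ} (hab : a < b) (hc : 0 < c)
    (hf : ∀ y ∈ Ioo a b, c * (b - y)⁻¹ ≤ f y) : ¬ IntegrableOn f (Ioo a b) := by
  intro hint
  have hpole : IntegrableOn (fun y => c * (b - y)⁻¹) (Ioo a b) := by
    refine hint.mono' (by fun_prop) ((ae_restrict_iff' measurableSet_Ioo).2 (.of_forall ?_))
    intro y hy
    have : 0 < b - y := sub_pos.2 hy.2
    rw [Real.norm_of_nonneg (by positivity)]
    exact hf y hy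
  have : IntervalIntegrable (fun y => (y - b)⁻¹) volume a b := by
    rw [intervalIntegrable_iff_integrableOn_Ioo_of_le hab.le]
    refine IntegrableOn.congr_fun (hpole.const_mul (-c⁻¹)) (fun y _ => ?_) measurableSet_Ioo
    rw [← neg_sub b y, inv_neg]
    field_simp
  simp [hab.ne, hab.le] at this

lemma not_integrableOn_Ioo_pow_smul_radialDensity (m : ℕ) :
    ¬ IntegrableOn (fun y : ℝ => y ^ m • radialDensity y) (Ioo 0 1) := by
  refine fun h => not_integrableOn_Ioo_of_mul_inv_sub_le (a := 1 / 2) (c := (1 / 2) ^ m / 4)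
    (by norm_num) (by positivity) (fun y hy => ?_) (h.mono_set (Ioo_subset_Ioo_left (by norm_num)))
  obtain ⟨hy₁, hy₂⟩ := hy
  have h1y : 0 < 1 - y := by linarith
  have hpow : (1 / 2 : ℝ) ^ m ≤ y ^ m := pow_le_pow_left₀ (by norm_num) hy₁.le m
  calc (1 / 2 : ℝ) ^ m / 4 * (1 - y)⁻¹ = (1 / 2) ^ m / (4 * (1 - y)) := by field_simp
    _ ≤ y ^ m / (4 * (1 - y)) := by gcongr
    _ ≤ y ^ m * (1 + y) ^ 2 / (4 * (1 - y)) := by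
        gcongr
        exact le_mul_of_one_le_right (by positivity) (by nlinarith)
    _ = y ^ m • radialDensity y := by rw [smul_eq_mul, radialDensity, mul_div_assoc]

lemma not_integrableOn_unitBall_radialDensity_norm {E : Type*} [NormedAddCommGroup E]
    [NormedSpace ℝ E] [FiniteDimensional ℝ E] [MeasurableSpace E] [BorelSpace E] [Nontrivial E]
    (μ : Measure E) [μ.IsAddHaarMeasure] :
    ¬ IntegrableOn (fun x : E => radialDensity ‖x‖) (ball 0 1) μ := fun h =>
  not_integrableOn_Ioo_pow_smul_radialDensity _ ((integrableOn_fun_norm_addHaar μ).1 h)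

theorem stmt_11 (n : ℕ) (hn : 2 ≤ n) :
    (∀ x : EuclideanSpace ℝ (Fin n), x ∈ ball (0 : EuclideanSpace ℝ (Fin n)) 1 → x ≠ 0 →
      (F1Star n x (-((2 * ‖x‖ * Real.sqrt (1 - ‖x‖))⁻¹ • x))) ^ 2 =
        (1 + ‖x‖) ^ 2 / (4 * (1 - ‖x‖))) ∧
    (∫⁻ x in ball (0 : EuclideanSpace ℝ (Fin n)) 1,
      ENNReal.ofReal ((F1Star n x (-((2 * ‖x‖ * Real.sqrt (1 - ‖x‖))⁻¹ • x))) ^ 2)) = ⊤ ∧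
    ¬ IntegrableOn
        (fun x : EuclideanSpace ℝ (Fin n) =>
          (F1Star n x (-((2 * ‖x‖ * Real.sqrt (1 - ‖x‖))⁻¹ • x))) ^ 2)
        (ball (0 : EuclideanSpace ℝ (Fin n)) 1) := by
  have hformula : ∀ x : EuclideanSpace ℝ (Fin n), x ∈ ball 0 1 → x ≠ 0 →
      F1Star n x (-((2 * ‖x‖ * √(1 - ‖x‖))⁻¹ • x)) ^ 2 = (1 + ‖x‖) ^ 2 / (4 * (1 - ‖x‖)) :=
    fun x hx hx0 => sq_F1Star_neg_gradient (mem_ball_zero_iff.mp hx) hx0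
  have : Nonempty (Fin n) := ⟨⟨0, by omega⟩⟩
  have hae : (fun x => F1Star n x (-((2 * ‖x‖ * √(1 - ‖x‖))⁻¹ • x)) ^ 2)
      =ᵐ[volume.restrict (ball 0 1)] fun x => radialDensity ‖x‖ := by
    filter_upwards [ae_restrict_mem measurableSet_ball,
      ae_restrict_of_ae (Measure.ae_ne volume 0)] with x hx hx0
    exact hformula x hx hx0
  have hnot : ¬ IntegrableOn (fun x => F1Star n x (-((2 * ‖x‖ * √(1 - ‖x‖))⁻¹ • x)) ^ 2)
      (ball 0 1) := fun h =>
    not_integrableOn_unitBall_radialDensity_norm volume (h.congr_fun_ae hae)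
  refine ⟨hformula, ?_, hnot⟩
  by_contra hfin
  refine hnot ((lintegral_ofReal_ne_top_iff_integrable ?_ (.of_forall fun x => sq_nonneg _)).1 hfin)
  unfold F1Star
  fun_prop
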